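/- arXiv:0803.3750 — 2 statements merged into one kernel-verified Lean document; each statement's English description precedes it below -/
import Mathlib

section
/- For any f : {-1,1}^I → {-1,1} and any i, j ∈ I, P[i ∈ S_f and j ∈ S_f] = P[i and j are both pivotal for f]. Consequently E[|S_f|²] = E[|P_f|²], where P_f denotes the (random) set of pivotal bits. -/
open Finset

variable {I : Type*} [Fintype I] [DecidableEq I]

/-- Expectation with respect to the uniform probability measure on `{-1,1}^I ≅ (I → Bool)`. -/
noncomputable def expec (f : (I → Bool) → ℝ) : ℝ :=
  (∑ ω : I → Bool, f ω) / (Fintype.card (I → Bool) : ℝ)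

/-- The value `±1` of a bit. -/
noncomputable def sgn (b : Bool) : ℝ := if b then 1 else -1

/-- The Walsh function `χ_S(ω) = ∏_{i ∈ S} ω_i`. -/
noncomputable def chi (S : Finset I) (ω : I → Bool) : ℝ := ∏ i ∈ S, sgn (ω i)

/-- The Fourier coefficient `f̂(S) = E[f ⬝ χ_S]`. -/
noncomputable def fhat (f : (I → Bool) → ℝ) (S : Finset I) : ℝ :=
  expec (fun ω => f ω * chi S ω)


/-!
Write `∂ᵢf(ω) = (f(ω) - f(ω with bit i flipped)) / 2` for the discrete derivative. Flipping bit `i`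
multiplies `χ_S` by `-1` exactly when `i ∈ S`, so `∂ᵢf` has Fourier coefficients `f̂(S)·1[i ∈ S]`, and
Plancherel gives `∑_{S ∋ i, j} f̂(S)² = E[∂ᵢf ⬝ ∂ⱼf]`. For a `±1`-valued `f`, `∂ᵢf(ω)` is `f(ω)` when
`i` is pivotal at `ω` and `0` otherwise, so `∂ᵢf ⬝ ∂ⱼf` is the indicator that `i` and `j` are both
pivotal. Summing over all pairs `(i, j)` turns both sides into second moments of cardinalities.
-/

open Function

lemma sgn_mul_self (b : Bool) : sgn b * sgn b = 1 := by
  cases b <;> norm_num [sgn]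

lemma sgn_not (b : Bool) : sgn (!b) = -sgn b := by
  cases b <;> norm_num [sgn]

lemma expec_sum {α : Type*} [Fintype α] (g : α → (I → Bool) → ℝ) :
    expec (fun ω => ∑ x, g x ω) = ∑ x, expec (g x) := by
  simp only [expec, ← Finset.sum_div]
  rw [Finset.sum_comm]

lemma sum_chi_mul_chi (ω τ : I → Bool) :
    ∑ S : Finset I, chi S ω * chi S τ = if ω = τ then (Fintype.card (I → Bool) : ℝ) else 0 := by
  have hprod : ∑ S : Finset I, chi S ω * chi S τ = ∏ i, (sgn (ω i) * sgn (τ i) + 1) := by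
    simp [Finset.prod_add, chi, Finset.prod_mul_distrib]
  rw [hprod]
  split_ifs with h
  · subst h
    simp [sgn_mul_self, one_add_one_eq_two]
  · obtain ⟨i, hi⟩ := Function.ne_iff.mp h
    refine Finset.prod_eq_zero (Finset.mem_univ i) ?_
    revert hi
    cases ω i <;> cases τ i <;> norm_num [sgn]

theorem sum_fhat_mul_fhat (f g : (I → Bool) → ℝ) :
    ∑ S, fhat f S * fhat g S = expec (fun ω => f ω * g ω) := by
  have hN : (Fintype.card (I → Bool) : ℝ) ≠ 0 := by positivity
  have hsum : ∑ S, (∑ ω, f ω * chi S ω) * (∑ τ, g τ * chi S τ)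
      = Fintype.card (I → Bool) * ∑ ω, f ω * g ω := by
    calc ∑ S, (∑ ω, f ω * chi S ω) * (∑ τ, g τ * chi S τ)
        = ∑ ω, ∑ τ, f ω * g τ * ∑ S : Finset I, chi S ω * chi S τ := by
          simp_rw [Finset.sum_mul_sum, Finset.mul_sum]
          rw [Finset.sum_comm]
          refine Finset.sum_congr rfl fun ω _ => ?_
          rw [Finset.sum_comm]
          exact Finset.sum_congr rfl fun τ _ => Finset.sum_congr rfl fun S _ => by ring
      _ = Fintype.card (I → Bool) * ∑ ω, f ω * g ω := by
          simp [sum_chi_mul_chi, Finset.mul_sum, mul_comm]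
  simp only [fhat, expec, div_mul_div_comm, ← Finset.sum_div, hsum]
  exact mul_div_mul_left _ _ hN

lemma chi_update_not {ι : Type*} [DecidableEq ι] (S : Finset ι) (i : ι) (ω : ι → Bool) :
    chi S (update ω i (!ω i)) = (if i ∈ S then -1 else 1) * chi S ω := by
  split_ifs with h
  · rw [chi, chi, ← Finset.mul_prod_erase _ _ h, ← Finset.mul_prod_erase _ (fun k => sgn (ω k)) h,
      Finset.prod_congr rfl fun k hk => by rw [update_of_ne (Finset.ne_of_mem_erase hk)],
      update_self, sgn_not]
    ring
  · rw [one_mul, chi, chi]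
    exact Finset.prod_congr rfl fun k hk => by rw [update_of_ne (ne_of_mem_of_not_mem hk h)]

noncomputable def discDeriv {ι : Type*} [DecidableEq ι] (i : ι) (f : (ι → Bool) → ℝ)
    (ω : ι → Bool) : ℝ :=
  (f ω - f (update ω i (!ω i))) / 2

lemma fhat_discDeriv (i : I) (f : (I → Bool) → ℝ) (S : Finset I) :
    fhat (discDeriv i f) S = if i ∈ S then fhat f S else 0 := by
  have hflip : Bijective (fun ω : I → Bool => update ω i (!ω i)) :=
    Involutive.bijective fun ω => by simp
  have hsum : ∑ ω, f (update ω i (!ω i)) * chi S ω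
      = (if i ∈ S then -1 else 1) * ∑ ω, f ω * chi S ω := by
    rw [Finset.mul_sum]
    refine Fintype.sum_bijective _ hflip _ _ fun ω => ?_
    simp only [chi_update_not]
    split_ifs <;> ring
  simp only [fhat, expec, discDeriv, sub_div, sub_mul, div_mul_eq_mul_div, Finset.sum_sub_distrib,
    ← Finset.sum_div, hsum]
  split_ifs <;> ring

lemma discDeriv_eq_ite_pivotal {ι : Type*} [DecidableEq ι] {f : (ι → Bool) → ℝ}
    (hpm : ∀ ω, f ω = 1 ∨ f ω = -1) (i : ι) (ω : ι → Bool) :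
    discDeriv i f ω = if f (update ω i (!ω i)) ≠ f ω then f ω else 0 := by
  unfold discDeriv
  rcases hpm ω with h | h <;> rcases hpm (update ω i (!ω i)) with h' | h' <;>
    simp [h, h'] <;> norm_num

open Classical in
theorem sum_fhat_sq_of_pair_mem_eq_expec_pivotal {f : (I → Bool) → ℝ}
    (hpm : ∀ ω, f ω = 1 ∨ f ω = -1) (i j : I) :
    (∑ S : Finset I, if i ∈ S ∧ j ∈ S then fhat f S ^ 2 else 0)
      = expec (fun ω => if f (update ω i (!ω i)) ≠ f ω ∧
          f (update ω j (!ω j)) ≠ f ω then 1 else 0) := by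
  calc (∑ S : Finset I, if i ∈ S ∧ j ∈ S then fhat f S ^ 2 else 0)
      = ∑ S, fhat (discDeriv i f) S * fhat (discDeriv j f) S := by
        refine Finset.sum_congr rfl fun S _ => ?_
        simp only [fhat_discDeriv]
        split_ifs <;> simp_all [sq]
    _ = expec (fun ω => discDeriv i f ω * discDeriv j f ω) := sum_fhat_mul_fhat _ _
    _ = _ := by
        congr 1
        funext ω
        have hsq : f ω * f ω = 1 := by rcases hpm ω with h | h <;> simp [h]
        simp only [discDeriv_eq_ite_pivotal hpm]
        split_ifs <;> simp_all

lemma card_sq_eq_sum_sum {ι : Type*} [Fintype ι] [DecidableEq ι] (s : Finset ι) :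
    (s.card : ℝ) ^ 2 = ∑ i, ∑ j, if i ∈ s ∧ j ∈ s then 1 else 0 := by
  simp [ite_and, Finset.sum_ite_mem, sq]

open Classical in
/-- For `f : {-1,1}^I → {-1,1}` and `i, j ∈ I`,
`P[i ∈ 𝒮_f ∧ j ∈ 𝒮_f] = P[i and j are both pivotal]`; consequently
`E[|𝒮_f|²] = E[|𝒫_f|²]` where `𝒫_f(ω)` is the set of pivotal bits. -/
theorem spectral_pair_eq_pivotal_pair (f : (I → Bool) → ℝ)
    (hpm : ∀ ω, f ω = 1 ∨ f ω = -1) :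
    (∀ i j : I,
      (∑ S : Finset I, if i ∈ S ∧ j ∈ S then fhat f S ^ 2 else 0)
        = expec (fun ω => if f (Function.update ω i (!ω i)) ≠ f ω ∧
            f (Function.update ω j (!ω j)) ≠ f ω then 1 else 0)) ∧
    (∑ S : Finset I, fhat f S ^ 2 * (S.card : ℝ) ^ 2)
      = expec (fun ω =>
          ((univ.filter (fun i : I => f (Function.update ω i (!ω i)) ≠ f ω)).card : ℝ) ^ 2) := by
  refine ⟨sum_fhat_sq_of_pair_mem_eq_expec_pivotal hpm, ?_⟩
  calc ∑ S : Finset I, fhat f S ^ 2 * (S.card : ℝ) ^ 2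
      = ∑ i, ∑ j, ∑ S : Finset I, if i ∈ S ∧ j ∈ S then fhat f S ^ 2 else 0 := by
        simp only [card_sq_eq_sum_sum, Finset.mul_sum, mul_ite, mul_one, mul_zero]
        rw [Finset.sum_comm]
        exact Finset.sum_congr rfl fun i _ => Finset.sum_comm
    _ = ∑ i, ∑ j, expec (fun ω => if f (update ω i (!ω i)) ≠ f ω ∧
          f (update ω j (!ω j)) ≠ f ω then 1 else 0) := by
        simp only [sum_fhat_sq_of_pair_mem_eq_expec_pivotal hpm]
    _ = _ := by
        simp only [← expec_sum, card_sq_eq_sum_sum, Finset.mem_filter, Finset.mem_univ, true_and]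
end

section
/- Large deviation principle for correlated indicators: let x, y be random vectors in {0,1}^n with y_i ≤ x_i a.s. for all i, X = ∑ x_i, Y = ∑ y_i. Suppose there is a ∈ (0,1] such that for each j ∈ [n] and every I ⊆ [n]∖{j}: P[y_j=1 | y_i=0 ∀i∈I] ≥ a·P[x_j=1 | y_i=0 ∀i∈I]. Then P[Y=0 | X>0] ≤ a^{-1}·E[e^{-aX/e} | X>0]. -/
/-!
Put `t = e⁻¹`. For each `j`, the weight `∏_{i ≠ j} t^{y_i}` is a nonnegative combination of the
indicators of `{y_i = 0 ∀ i ∈ I}`, `I ⊆ [n] ∖ {j}`, so the hypothesis integrates against it; since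
this weight dominates `t^Y` and equals `e t^Y` where `y_j = 1`, this gives
`a E[x_j t^Y] ≤ e E[y_j t^Y]`, and summing over `j`, `a E[X e^{-Y}] ≤ e E[Y e^{-Y}]`.
The theorem follows by integrating the pointwise bound
`a 1{Y = 0 < X} + (e Y - a X) e^{-Y} ≤ 1{X > 0} e^{-aX/e}`, which for `Y ≥ 1` is the tangent-line
inequality for `exp` at `1 - Y`.
-/

open MeasureTheory Real Finset

section Algebra

variable {ι R : Type*}

lemma pow_card_filter_eq_prod [CommMonoid R] (s : Finset ι) (b : ι → Bool) (t : R) :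
    t ^ #{i ∈ s | b i} = ∏ i ∈ s, if b i then t else 1 := by
  rw [prod_ite, prod_const, prod_const_one, mul_one]

lemma prod_ite_eq_sum_powerset [CommRing R] [DecidableEq ι] (s : Finset ι) (b : ι → Bool)
    (t : R) :
    ∏ i ∈ s, (if b i then t else 1) =
      ∑ I ∈ s.powerset, (1 - t) ^ #I * t ^ #(s \ I) * if ∀ i ∈ I, b i = false then 1 else 0 := by
  calc ∏ i ∈ s, (if b i then t else 1)
      = ∏ i ∈ s, ((1 - t) * (if b i = false then 1 else 0) + t) :=
        prod_congr rfl fun i _ => by cases b i <;> simp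
    _ = _ := by
        rw [prod_add]
        refine sum_congr rfl fun I _ => ?_
        rw [prod_mul_distrib, prod_const, prod_const, prod_boole, mul_right_comm]

lemma exp_mul_sub_add_one_le (r s : ℝ) : exp r * (s - r + 1) ≤ exp s :=
  calc exp r * (s - r + 1) ≤ exp r * exp (s - r) := by gcongr; exact add_one_le_exp _
    _ = exp s := by rw [← exp_add, add_sub_cancel]

lemma mul_ite_add_sub_le_ite_exp {a : ℝ} (ha : 0 ≤ a) {k m : ℕ} (hmk : m ≤ k) :
    a * (if (m : ℝ) = 0 ∧ 0 < (k : ℝ) then 1 else 0) + exp 1 * (m * exp (-1) ^ m) -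
        a * (k * exp (-1) ^ m) ≤
      if 0 < (k : ℝ) then exp (-a * k / exp 1) else 0 := by
  rcases Nat.eq_zero_or_pos m with rfl | hm
  · rcases Nat.eq_zero_or_pos k with rfl | hk
    · simp
    · have hk1 : (1 : ℝ) ≤ k := Nat.one_le_cast.2 hk
      have hk0 : 0 < (k : ℝ) := by positivity
      simp only [Nat.cast_zero, true_and, if_pos hk0, pow_zero, mul_one, mul_zero, add_zero]
      nlinarith [exp_pos (-a * k / exp 1)]
  · have hk : 0 < (k : ℝ) := by exact_mod_cast hm.trans_le hmk
    have hm0 : (m : ℝ) ≠ 0 := by positivity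
    rw [if_neg fun h => hm0 h.1, if_pos hk, mul_zero, zero_add]
    calc exp 1 * (m * exp (-1) ^ m) - a * (k * exp (-1) ^ m)
        = exp (1 - m) * (-a * k / exp 1 - (1 - m) + 1) := by
          rw [← exp_nat_mul, mul_neg_one, exp_neg, exp_sub]
          field_simp
          ring
      _ ≤ exp (-a * k / exp 1) := exp_mul_sub_add_one_le _ _

end Algebra

section Measure

variable {Ω ι : Type*} [MeasurableSpace Ω] {μ : Measure Ω}

lemma measurable_of_measurableSet_eq_true {v : Ω → ι → Bool}
    (h : ∀ i, MeasurableSet {ω | v ω i = true}) : Measurable v :=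
  measurable_pi_iff.mpr fun i => measurable_to_bool (h i)

lemma measurableSet_setOf_comp {α : Type*} [MeasurableSpace α] [DiscreteMeasurableSpace α]
    {v : Ω → α} (hv : Measurable v) (p : α → Prop) : MeasurableSet {ω | p (v ω)} :=
  hv (MeasurableSet.of_discrete (s := {a | p a}))

lemma integrable_comp_of_finite [IsFiniteMeasure μ] {α : Type*} [MeasurableSpace α] [Finite α]
    [MeasurableSingletonClass α] {v : Ω → α} (hv : Measurable v) (g : α → ℝ) :
    Integrable (fun ω => g (v ω)) μ :=
  Integrable.of_finite.comp_measurable hv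

variable [Finite ι] [IsFiniteMeasure μ] {y : Ω → ι → Bool}

lemma setIntegral_prod_ite_eq_sum [DecidableEq ι] (hy : Measurable y) (s : Finset ι)
    (A : Set Ω) (t : ℝ) :
    ∫ ω in A, ∏ i ∈ s, (if y ω i then t else 1) ∂μ =
      ∑ I ∈ s.powerset, (1 - t) ^ #I * t ^ #(s \ I) *
        μ.real (A ∩ {ω | ∀ i ∈ I, y ω i = false}) := by
  simp_rw [prod_ite_eq_sum_powerset]
  rw [integral_finsetSum]
  swap
  · intro I _
    exact integrable_comp_of_finite (μ := μ.restrict A) hy fun b =>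
      (1 - t) ^ #I * t ^ #(s \ I) * if ∀ i ∈ I, b i = false then 1 else 0
  refine sum_congr rfl fun I _ => ?_
  rw [integral_const_mul]
  congr 1
  have hB := measurableSet_setOf_comp hy fun b => ∀ i ∈ I, b i = false
  rw [Set.inter_comm, ← measureReal_restrict_apply hB, ← integral_indicator_one hB]
  simp only [Set.indicator_apply, Set.mem_ofPred_eq, Pi.one_apply]

lemma mul_setIntegral_prod_ite_le [DecidableEq ι] (hy : Measurable y) {s : Finset ι}
    {A A' : Set Ω} {a t : ℝ} (ht0 : 0 ≤ t) (ht1 : t ≤ 1)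
    (h : ∀ I ⊆ s, a * μ.real (A ∩ {ω | ∀ i ∈ I, y ω i = false}) ≤
      μ.real (A' ∩ {ω | ∀ i ∈ I, y ω i = false})) :
    a * ∫ ω in A, ∏ i ∈ s, (if y ω i then t else 1) ∂μ ≤
      ∫ ω in A', ∏ i ∈ s, (if y ω i then t else 1) ∂μ := by
  rw [setIntegral_prod_ite_eq_sum hy, setIntegral_prod_ite_eq_sum hy, mul_sum]
  refine sum_le_sum fun I hI => ?_
  have : 0 ≤ 1 - t := sub_nonneg.2 ht1
  rw [mul_left_comm]
  exact mul_le_mul_of_nonneg_left (h I (mem_powerset.1 hI)) (by positivity)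

end Measure

section Counts

variable {Ω ι : Type*} [MeasurableSpace Ω] {μ : Measure Ω} [Fintype ι] {x y : Ω → ι → Bool}

lemma mul_setIntegral_pow_card_le [IsFiniteMeasure μ] [DecidableEq ι] (hy : Measurable y)
    {a t : ℝ} (ha : 0 ≤ a) (ht0 : 0 < t) (ht1 : t ≤ 1)
    (hcond : ∀ (j : ι) (I : Finset ι), j ∉ I →
      a * μ.real ({ω | x ω j = true} ∩ {ω | ∀ i ∈ I, y ω i = false}) ≤
        μ.real ({ω | y ω j = true} ∩ {ω | ∀ i ∈ I, y ω i = false}))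
    (j : ι) :
    a * ∫ ω in {ω | x ω j = true}, t ^ #{i | y ω i} ∂μ ≤
      t⁻¹ * ∫ ω in {ω | y ω j = true}, t ^ #{i | y ω i} ∂μ := by
  set G : Ω → ℝ := fun ω => ∏ i ∈ univ.erase j, if y ω i then t else 1
  have hsplit (ω : Ω) : t ^ #{i | y ω i} = (if y ω j then t else 1) * G ω := by
    rw [pow_card_filter_eq_prod]
    exact (mul_prod_erase univ (fun i => if y ω i then t else 1) (mem_univ j)).symm
  have hG0 (ω : Ω) : 0 ≤ G ω := prod_nonneg fun i _ => by split_ifs <;> positivity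
  calc a * ∫ ω in {ω | x ω j = true}, t ^ #{i | y ω i} ∂μ
      ≤ a * ∫ ω in {ω | x ω j = true}, G ω ∂μ := by
        refine mul_le_mul_of_nonneg_left (setIntegral_mono
          (integrable_comp_of_finite hy fun b => t ^ #{i | b i}).integrableOn
          (integrable_comp_of_finite hy fun b =>
            ∏ i ∈ univ.erase j, if b i then t else 1).integrableOn
          fun ω => ?_) ha
        rw [hsplit]
        split_ifs
        · exact mul_le_of_le_one_left (hG0 ω) ht1
        · rw [one_mul]
    _ ≤ ∫ ω in {ω | y ω j = true}, G ω ∂μ :=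
        mul_setIntegral_prod_ite_le hy ht0.le ht1 fun I hI =>
          hcond j I fun hj => (mem_erase.1 (hI hj)).1 rfl
    _ = t⁻¹ * ∫ ω in {ω | y ω j = true}, t ^ #{i | y ω i} ∂μ := by
        rw [← integral_const_mul]
        refine setIntegral_congr_fun (measurableSet_setOf_comp hy fun b => b j = true)
          fun ω hω => ?_
        rw [hsplit, if_pos (show y ω j = true from hω), inv_mul_cancel_left₀ ht0.ne']

lemma integral_card_filter_mul (hx : Measurable x) {f : Ω → ℝ} (hf : Integrable f μ) :
    ∫ ω, (#{i | x ω i} : ℝ) * f ω ∂μ = ∑ j, ∫ ω in {ω | x ω j = true}, f ω ∂μ := by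
  have hmeas (j : ι) := measurableSet_setOf_comp hx fun b => b j = true
  have hsum (ω : Ω) :
      (#{i | x ω i} : ℝ) * f ω = ∑ j, {ω | x ω j = true}.indicator f ω := by
    simp only [natCast_card_filter, sum_mul, Set.indicator_apply, Set.mem_ofPred_eq, ite_mul,
      one_mul, zero_mul]
  simp_rw [hsum]
  rw [integral_finsetSum _ fun j _ => hf.indicator (hmeas j)]
  exact sum_congr rfl fun j _ => integral_indicator (hmeas j)

theorem mul_integral_card_mul_pow_le [IsFiniteMeasure μ] [DecidableEq ι] (hx : Measurable x)
    (hy : Measurable y) {a t : ℝ} (ha : 0 ≤ a) (ht0 : 0 < t) (ht1 : t ≤ 1)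
    (hcond : ∀ (j : ι) (I : Finset ι), j ∉ I →
      a * μ.real ({ω | x ω j = true} ∩ {ω | ∀ i ∈ I, y ω i = false}) ≤
        μ.real ({ω | y ω j = true} ∩ {ω | ∀ i ∈ I, y ω i = false})) :
    a * ∫ ω, (#{i | x ω i} : ℝ) * t ^ #{i | y ω i} ∂μ ≤
      t⁻¹ * ∫ ω, (#{i | y ω i} : ℝ) * t ^ #{i | y ω i} ∂μ := by
  have hint := integrable_comp_of_finite (μ := μ) hy fun b => t ^ #{i | b i}
  rw [integral_card_filter_mul hx hint, integral_card_filter_mul hy hint, mul_sum, mul_sum]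
  exact sum_le_sum fun j _ => mul_setIntegral_pow_card_le hy ha ht0 ht1 hcond j

theorem mul_measureReal_le_setIntegral_exp [IsFiniteMeasure μ] (hx : Measurable x)
    (hy : Measurable y) (hyx : ∀ᵐ ω ∂μ, ∀ i, y ω i ≤ x ω i) {a : ℝ} (ha : 0 ≤ a)
    (hcond : ∀ (j : ι) (I : Finset ι), j ∉ I →
      a * μ.real ({ω | x ω j = true} ∩ {ω | ∀ i ∈ I, y ω i = false}) ≤
        μ.real ({ω | y ω j = true} ∩ {ω | ∀ i ∈ I, y ω i = false}))
    {X Y : Ω → ℝ} (hX : ∀ ω, X ω = #{i | x ω i}) (hY : ∀ ω, Y ω = #{i | y ω i}) :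
    a * μ.real ({ω | Y ω = 0} ∩ {ω | 0 < X ω}) ≤
      ∫ ω in {ω | 0 < X ω}, exp (-a * X ω / exp 1) ∂μ := by
  classical
  simp only [hX, hY]
  have hcore := mul_integral_card_mul_pow_le hx hy ha (exp_pos (-1))
    (exp_le_one_iff.2 (by norm_num)) hcond
  rw [show (exp (-1))⁻¹ = exp 1 by rw [exp_neg, inv_inv]] at hcore
  set t := exp (-1)
  have hint (g : (ι → Bool) × (ι → Bool) → ℝ) : Integrable (fun ω => g (x ω, y ω)) μ :=
    integrable_comp_of_finite (hx.prodMk hy) g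
  have hS := measurableSet_setOf_comp hx fun b => 0 < (#{i | b i} : ℝ)
  have hZ := (measurableSet_setOf_comp hy fun b => (#{i | b i} : ℝ) = 0).inter hS
  have hYt : Integrable (fun ω => (#{i | y ω i} : ℝ) * t ^ #{i | y ω i}) μ :=
    hint fun b => #{i | b.2 i} * t ^ #{i | b.2 i}
  have hXt : Integrable (fun ω => (#{i | x ω i} : ℝ) * t ^ #{i | y ω i}) μ :=
    hint fun b => #{i | b.1 i} * t ^ #{i | b.2 i}
  have hZ1 := ((integrable_const (μ := μ) (1 : ℝ)).indicator hZ).const_mul a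
  simp only [← Pi.one_def] at hZ1
  have hptw : ∀ᵐ ω ∂μ,
      a * ({ω | (#{i | y ω i} : ℝ) = 0} ∩ {ω | 0 < (#{i | x ω i} : ℝ)}).indicator 1 ω
        + exp 1 * (#{i | y ω i} * t ^ #{i | y ω i}) - a * (#{i | x ω i} * t ^ #{i | y ω i}) ≤
      {ω | 0 < (#{i | x ω i} : ℝ)}.indicator (fun ω => exp (-a * #{i | x ω i} / exp 1)) ω := by
    filter_upwards [hyx] with ω hω
    simp only [Set.indicator_apply, Set.mem_inter_iff, Set.mem_ofPred_eq, Pi.one_apply]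
    exact mul_ite_add_sub_le_ite_exp ha
      (card_le_card (monotone_filter_right _ fun i _ => Bool.le_iff_imp.1 (hω i)))
  have hmono := integral_mono_ae (by exact (hZ1.add (hYt.const_mul _)).sub (hXt.const_mul a))
    (by exact (hint fun b => exp (-a * #{i | b.1 i} / exp 1)).indicator hS) hptw
  rw [integral_sub (by exact hZ1.add (hYt.const_mul _)) (hXt.const_mul a),
    integral_add hZ1 (hYt.const_mul _), integral_const_mul, integral_const_mul,
    integral_const_mul, integral_indicator_one hZ, integral_indicator hS] at hmono
  linarith

end Counts

theorem large_deviation_correlated_general {Ω : Type*} [MeasurableSpace Ω]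
    (μ : Measure Ω) [IsProbabilityMeasure μ]
    (n : ℕ) (x y : Ω → Fin n → Bool)
    (hxm : ∀ i, MeasurableSet {ω | x ω i = true})
    (hym : ∀ i, MeasurableSet {ω | y ω i = true})
    (hyx : ∀ᵐ ω ∂μ, ∀ i, y ω i ≤ x ω i)
    (a : ℝ) (ha0 : 0 < a)
    (hcond : ∀ (j : Fin n) (I : Finset (Fin n)), j ∉ I →
      a * (μ ({ω | x ω j = true} ∩ {ω | ∀ i ∈ I, y ω i = false})).toReal ≤
        (μ ({ω | y ω j = true} ∩ {ω | ∀ i ∈ I, y ω i = false})).toReal)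
    (X Y : Ω → ℝ)
    (hX : ∀ ω, X ω = ∑ i : Fin n, (if x ω i then (1 : ℝ) else 0))
    (hY : ∀ ω, Y ω = ∑ i : Fin n, (if y ω i then (1 : ℝ) else 0)) :
    (μ ({ω | Y ω = 0} ∩ {ω | 0 < X ω})).toReal / (μ {ω | 0 < X ω}).toReal
      ≤ a⁻¹ * ((∫ ω in {ω | 0 < X ω}, exp (-a * X ω / exp 1) ∂μ)
          / (μ {ω | 0 < X ω}).toReal) := by
  have hmain := mul_measureReal_le_setIntegral_exp (measurable_of_measurableSet_eq_true hxm)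
    (measurable_of_measurableSet_eq_true hym) hyx ha0.le hcond
    (fun ω => (hX ω).trans (natCast_card_filter _ _).symm)
    (fun ω => (hY ω).trans (natCast_card_filter _ _).symm)
  rw [← mul_div_assoc]
  exact div_le_div_of_nonneg_right ((le_inv_mul_iff₀ ha0).2 hmain) ENNReal.toReal_nonneg

/-- **Large deviation principle for correlated indicators.** Let `x, y` be random
vectors in `{0,1}^n` with `y_i ≤ x_i` a.s., `X = ∑ x_i`, `Y = ∑ y_i`. If there is
`a ∈ (0,1]` such that `P[y_j = 1, y_i = 0 ∀ i ∈ I] ≥ a ⬝ P[x_j = 1, y_i = 0 ∀ i ∈ I]`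
for every `j ∉ I ⊆ [n]`, then `P[Y = 0 | X > 0] ≤ a⁻¹ E[e^{-aX/e} | X > 0]`. -/
theorem large_deviation_correlated {Ω : Type*} [MeasurableSpace Ω]
    (μ : Measure Ω) [IsProbabilityMeasure μ]
    (n : ℕ) (x y : Ω → Fin n → Bool)
    (hxm : ∀ i, MeasurableSet {ω | x ω i = true})
    (hym : ∀ i, MeasurableSet {ω | y ω i = true})
    (hyx : ∀ᵐ ω ∂μ, ∀ i, y ω i ≤ x ω i)
    (a : ℝ) (ha0 : 0 < a) (ha1 : a ≤ 1)
    (hcond : ∀ (j : Fin n) (I : Finset (Fin n)), j ∉ I →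
      a * (μ ({ω | x ω j = true} ∩ {ω | ∀ i ∈ I, y ω i = false})).toReal ≤
        (μ ({ω | y ω j = true} ∩ {ω | ∀ i ∈ I, y ω i = false})).toReal)
    (X Y : Ω → ℝ)
    (hX : ∀ ω, X ω = ∑ i : Fin n, (if x ω i then (1 : ℝ) else 0))
    (hY : ∀ ω, Y ω = ∑ i : Fin n, (if y ω i then (1 : ℝ) else 0))
    (hpos : 0 < (μ {ω | 0 < X ω}).toReal) :
    (μ ({ω | Y ω = 0} ∩ {ω | 0 < X ω})).toReal / (μ {ω | 0 < X ω}).toReal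
      ≤ a⁻¹ * ((∫ ω in {ω | 0 < X ω}, exp (-a * X ω / exp 1) ∂μ)
          / (μ {ω | 0 < X ω}).toReal) :=
  large_deviation_correlated_general μ n x y hxm hym hyx a ha0 hcond X Y hX hY
end
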